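/- (Corollary 2: permutation equivariance of the Parallel DAG Convolutional Network) Let N ≥ 1, let A be an N×N real strictly lower triangular matrix with causal graph-shift operators S_k = W · D_k · W⁻¹, and let σ be a permutation of Fin N with permutation matrix P, yielding permuted GSOs S'_q built from A' = P A Pᵀ. Fix L ≥ 1, feature dimensions F_0, …, F_L, a function ρ : ℝ → ℝ applied entrywise to matrices, and shared parameter matrices Θ^{(ℓ)} ∈ ℝ^{F_{ℓ−1} × F_ℓ} for ℓ ∈ {1,…,L}; define MLP(Y) = ρ.( … ρ.(Y · Θ^{(1)}) … · Θ^{(L)}), i.e., the L-fold alternation of right multiplication by Θ^{(ℓ)} and entrywise ρ. Then for every input X ∈ ℝ^{N × F_0}, ∑_q MLP(S'_q · (P · X)) = P · ∑_k MLP(S_k · X). -/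

import Mathlib

/-! Relabeling the nodes by `σ` acts on every ingredient of the network as a simultaneous
reindexing of rows and columns by `τ = σ⁻¹`: `A' = A ∘ (τ × τ)`, and since the matrix inverse
commutes with reindexing, so do `W'`, `D'_{σ k}` and `S'_{σ k}`. Hence `S'_{σ k} (P X) = P (S_k X)`.
The MLP acts on each row separately, so it commutes with the row permutation `P`, and summing
over `q = σ k` gives the claim. -/

open Matrix BigOperators

/-- The shared multilayer perceptron of the Parallel DCN: the `L`-fold
alternation of right multiplication by the parameter matrices `Θ ℓ` and
entrywise application of the activation `ρ`. -/
def sharedMLP {N : ℕ} (F : ℕ → ℕ) (ρ : ℝ → ℝ)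
    (Θ : (ℓ : ℕ) → Matrix (Fin (F ℓ)) (Fin (F (ℓ + 1))) ℝ) :
    (L : ℕ) → Matrix (Fin N) (Fin (F 0)) ℝ → Matrix (Fin N) (Fin (F L)) ℝ
  | 0, Y => Y
  | L + 1, Y => ((sharedMLP F ρ Θ L Y) * Θ L).map ρ

lemma sharedMLP_submatrix {N : ℕ} (F : ℕ → ℕ) (ρ : ℝ → ℝ)
    (Θ : (ℓ : ℕ) → Matrix (Fin (F ℓ)) (Fin (F (ℓ + 1))) ℝ) (e : Fin N → Fin N) (L : ℕ)
    (Y : Matrix (Fin N) (Fin (F 0)) ℝ) :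
    sharedMLP F ρ Θ L (Y.submatrix e id) = (sharedMLP F ρ Θ L Y).submatrix e id := by
  induction L with
  | zero => rfl
  | succ L ih =>
    rw [sharedMLP, sharedMLP, ih, submatrix_map,
      submatrix_mul _ _ e id id Function.bijective_id, submatrix_id_id]

section Reindex

variable {m n R K : Type*} [DecidableEq m] [DecidableEq n]

lemma eq_permMatrix_inv [Zero R] [One R] {σ : Equiv.Perm n} {P : Matrix n n R}
    (hP : ∀ i j, P i j = if σ j = i then 1 else 0) : P = σ⁻¹.permMatrix R := by
  ext i j
  simp [hP, Equiv.eq_symm_apply, eq_comm]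

variable [Fintype m] [Fintype n]

lemma permMatrix_mul_mul_transpose [NonAssocSemiring R] (τ : Equiv.Perm n) (M : Matrix n n R) :
    τ.permMatrix R * M * (τ.permMatrix R)ᵀ = M.submatrix τ τ := by
  rw [transpose_permMatrix, PEquiv.toMatrix_toPEquiv_mul, PEquiv.mul_toMatrix_toPEquiv,
    submatrix_submatrix]
  rfl

lemma inv_one_sub_submatrix [CommRing K] (A : Matrix n n K) (e : m ≃ n) :
    (1 - A.submatrix e e)⁻¹ = (1 - A)⁻¹.submatrix e e := by
  rw [← submatrix_one_equiv e]
  exact inv_submatrix_equiv (1 - A) e e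

end Reindex

section CausalGSO

variable {m n K : Type*} [DecidableEq m] [DecidableEq n] [CommRing K] [DecidableEq K]

noncomputable def reachabilityDiagonal (W : Matrix n n K) (k : n) : Matrix n n K :=
  diagonal fun i => if W k i ≠ 0 then 1 else 0

lemma reachabilityDiagonal_submatrix (W : Matrix n n K) (e : m ≃ n) (k : m) :
    reachabilityDiagonal (W.submatrix e e) k = (reachabilityDiagonal W (e k)).submatrix e e := by
  rw [reachabilityDiagonal, reachabilityDiagonal, submatrix_diagonal_equiv]
  rfl

variable [Fintype m] [Fintype n]

noncomputable def causalGSO (W : Matrix n n K) (k : n) : Matrix n n K :=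
  W * reachabilityDiagonal W k * W⁻¹

lemma causalGSO_submatrix (W : Matrix n n K) (e : m ≃ n) (k : m) :
    causalGSO (W.submatrix e e) k = (causalGSO W (e k)).submatrix e e := by
  rw [causalGSO, causalGSO, reachabilityDiagonal_submatrix, inv_submatrix_equiv,
    submatrix_mul_equiv, submatrix_mul_equiv]

end CausalGSO

theorem pdcn_permutation_equivariant_general {N : ℕ}
    (A : Matrix (Fin N) (Fin N) ℝ)
    (W : Matrix (Fin N) (Fin N) ℝ) (hW : W = (1 - A)⁻¹)
    (D : Fin N → Matrix (Fin N) (Fin N) ℝ)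
    (hD : ∀ k, D k = Matrix.diagonal (fun i => if W k i ≠ 0 then (1 : ℝ) else 0))
    (S : Fin N → Matrix (Fin N) (Fin N) ℝ)
    (hS : ∀ k, S k = W * D k * W⁻¹)
    (σ : Equiv.Perm (Fin N))
    (P : Matrix (Fin N) (Fin N) ℝ)
    (hP : ∀ i j : Fin N, P i j = if σ j = i then 1 else 0)
    (A' : Matrix (Fin N) (Fin N) ℝ) (hA'def : A' = P * A * Pᵀ)
    (W' : Matrix (Fin N) (Fin N) ℝ) (hW' : W' = (1 - A')⁻¹)
    (D' : Fin N → Matrix (Fin N) (Fin N) ℝ)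
    (hD' : ∀ q, D' q = Matrix.diagonal (fun i => if W' q i ≠ 0 then (1 : ℝ) else 0))
    (S' : Fin N → Matrix (Fin N) (Fin N) ℝ)
    (hS' : ∀ q, S' q = W' * D' q * W'⁻¹)
    (L : ℕ)
    (F : ℕ → ℕ)
    (ρ : ℝ → ℝ)
    (Θ : (ℓ : ℕ) → Matrix (Fin (F ℓ)) (Fin (F (ℓ + 1))) ℝ)
    (X : Matrix (Fin N) (Fin (F 0)) ℝ) :
    ∑ q : Fin N, sharedMLP F ρ Θ L (S' q * (P * X)) =
      P * ∑ k : Fin N, sharedMLP F ρ Θ L (S k * X) := by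
  set τ := σ⁻¹
  have hP_mul : ∀ {f : ℕ} (M : Matrix (Fin N) (Fin f) ℝ), P * M = M.submatrix τ id := by
    intro f M
    rw [eq_permMatrix_inv hP]
    exact PEquiv.toMatrix_toPEquiv_mul τ M
  have hW'_eq : W' = W.submatrix τ τ := by
    rw [hW', hA'def, eq_permMatrix_inv hP, permMatrix_mul_mul_transpose, inv_one_sub_submatrix,
      hW]
  have hS'_eq : ∀ q, S' q = (S (τ q)).submatrix τ τ := by
    intro q
    rw [hS', hD', hS, hD, hW'_eq]
    exact causalGSO_submatrix W τ q
  have hterm : ∀ q, sharedMLP F ρ Θ L (S' q * (P * X)) = P * sharedMLP F ρ Θ L (S (τ q) * X) := by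
    intro q
    rw [hS'_eq, hP_mul, submatrix_mul_equiv, sharedMLP_submatrix, hP_mul]
  simp_rw [hterm, Equiv.sum_comp τ (fun k => P * sharedMLP F ρ Θ L (S k * X)), Matrix.mul_sum]

/-- Corollary 2: The Parallel DAG Convolutional Network is
permutation equivariant: `∑_q MLP(S'_q (P X)) = P ∑_k MLP(S_k X)`. -/
theorem pdcn_permutation_equivariant {N : ℕ} (hN : 1 ≤ N)
    (A : Matrix (Fin N) (Fin N) ℝ)
    (hA : ∀ i j : Fin N, i ≤ j → A i j = 0)
    (W : Matrix (Fin N) (Fin N) ℝ) (hW : W = (1 - A)⁻¹)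
    (D : Fin N → Matrix (Fin N) (Fin N) ℝ)
    (hD : ∀ k, D k = Matrix.diagonal (fun i => if W k i ≠ 0 then (1 : ℝ) else 0))
    (S : Fin N → Matrix (Fin N) (Fin N) ℝ)
    (hS : ∀ k, S k = W * D k * W⁻¹)
    (σ : Equiv.Perm (Fin N))
    (P : Matrix (Fin N) (Fin N) ℝ)
    (hP : ∀ i j : Fin N, P i j = if σ j = i then 1 else 0)
    (A' : Matrix (Fin N) (Fin N) ℝ) (hA'def : A' = P * A * Pᵀ)
    (W' : Matrix (Fin N) (Fin N) ℝ) (hW' : W' = (1 - A')⁻¹)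
    (D' : Fin N → Matrix (Fin N) (Fin N) ℝ)
    (hD' : ∀ q, D' q = Matrix.diagonal (fun i => if W' q i ≠ 0 then (1 : ℝ) else 0))
    (S' : Fin N → Matrix (Fin N) (Fin N) ℝ)
    (hS' : ∀ q, S' q = W' * D' q * W'⁻¹)
    (L : ℕ) (hL : 1 ≤ L)
    (F : ℕ → ℕ)
    (ρ : ℝ → ℝ)
    (Θ : (ℓ : ℕ) → Matrix (Fin (F ℓ)) (Fin (F (ℓ + 1))) ℝ)
    (X : Matrix (Fin N) (Fin (F 0)) ℝ) :
    ∑ q : Fin N, sharedMLP F ρ Θ L (S' q * (P * X)) =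
      P * ∑ k : Fin N, sharedMLP F ρ Θ L (S k * X) :=
  pdcn_permutation_equivariant_general A W hW D hD S hS σ P hP A' hA'def W' hW' D' hD' S' hS' L F ρ
    Θ X
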